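/- Low-biased estimate from an ε-greedy policy: fix ε > 0 and suppose that for every t < T and every reachable pair (y,x), there exists ĥ_t ∈ K_t(y,x) with H_t(ĥ_t, x) + E[V_{t+1}(y − ĥ_t, X_{t+1}) | X_t = x] ≥ sup_{h ∈ K_t(y,x)} { H_t(h,x) + E[V_{t+1}(y−h, X_{t+1}) | X_t = x] } − ε, where V_t solves the exact dynamic programming equations. Then the induced adapted policy π̂ = (ĥ_0,...,ĥ_T) is admissible and its value satisfies V^{K,*}_0(y_0, x) − (T+1)ε ≤ V^{π̂}_0(y_0, x) ≤ V^{K,*}_0(y_0, x). -/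

import Mathlib

/-!
Along a policy `h` with controls `y_t`, put `D_t = V^h_t - V_t(y_t, X_t)`. Splitting off the first
reward, the tower property and freezing the `ℱ_t`-measurable, finitely-valued `y_{t+1}` in
`E[V_{t+1}(y_{t+1}, X_{t+1}) | ℱ_t] = G_t(y_{t+1}, X_t)` give `D_t = g_t + E[D_{t+1} | ℱ_t]`, where
`g_t = H_t(h_t, X_t) + G_t(y_t - h_t, X_t) - V_t(y_t, X_t)` is the one-step Bellman gap
(and `D_T = H_T(h_T, X_T) - V_T(y_T, X_T)`). For an admissible policy the gaps are `≤ 0`: the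
Bellman supremum dominates every admissible action because it is bounded above (`H` is bounded,
hence so are `V` and `G`, almost surely). For the ε-greedy policy they are `≥ -ε`. Summing the
gaps backwards gives `V^h_0 ≤ V_0(y0, X_0)` for every admissible `h`, and
`V_0(y0, X_0) - (T+1)ε ≤ V^π̂_0`. On a finite `Ω` the first bound holds almost surely for all
admissible policies at once, so it also bounds the value function, and `π̂` is one of them.
-/

open MeasureTheory Finset

section Setup

variable {Ω : Type*}

/-- Control value at time `t`, starting from `y0` at time `t0`:
`y_t = y0 - ∑_{t0 ≤ s < t} h_s`. -/
noncomputable def ctrl {E : Type*} [AddCommGroup E] (y0 : E) (h : ℕ → Ω → E)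
    (t0 t : ℕ) (ω : Ω) : E :=
  y0 - ∑ s ∈ Finset.Ico t0 t, h s ω

/-- A `K`-admissible exercise policy on `{t0, …, T}` started at `y0`:
each `h_s` is `ℱ s`-measurable and a.s. `h_s(ω) ∈ K_s(y_s, X_s(ω))`. -/
def Admissible {E S : Type*} [AddCommGroup E] [MeasurableSpace E]
    {m0 : MeasurableSpace Ω} (μ : Measure Ω) (ℱ : Filtration ℕ m0) (T : ℕ)
    (K : ℕ → E → S → Set E) (X : ℕ → Ω → S) (t0 : ℕ) (y0 : E)
    (h : ℕ → Ω → E) : Prop :=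
  (∀ s, Measurable[ℱ s] (h s)) ∧
  (∀ᵐ ω ∂μ, ∀ s, t0 ≤ s → s ≤ T → h s ω ∈ K s (ctrl y0 h t0 s ω) (X s ω))

/-- The value of a policy at time `t0`:
`V^π_{t0} = E[∑_{s=t0}^T H_s(h_s, X_s) | ℱ_{t0}]`. -/
noncomputable def polValue {E S : Type*}
    {m0 : MeasurableSpace Ω} (μ : Measure Ω) (ℱ : Filtration ℕ m0) (T : ℕ)
    (H : ℕ → E → S → ℝ) (X : ℕ → Ω → S) (t0 : ℕ)
    (h : ℕ → Ω → E) : Ω → ℝ :=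
  μ[fun ω => ∑ s ∈ Finset.Icc t0 T, H s (h s ω) (X s ω) | ℱ t0]

/-- The value function `V^{K,*}_{t0}(y0)` as the supremum of policy values over
the `K`-admissible policies started at `y0` at time `t0`. -/
noncomputable def valueFn {E S : Type*} [AddCommGroup E] [MeasurableSpace E]
    {m0 : MeasurableSpace Ω} (μ : Measure Ω) (ℱ : Filtration ℕ m0) (T : ℕ)
    (H : ℕ → E → S → ℝ) (K : ℕ → E → S → Set E) (X : ℕ → Ω → S)
    (t0 : ℕ) (y0 : E) : Ω → ℝ :=
  fun ω => ⨆ π : {h : ℕ → Ω → E // Admissible μ ℱ T K X t0 y0 h},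
    polValue μ ℱ T H X t0 π.1 ω

end Setup

theorem Real.biSup_le {α : Type*} {s : Set α} {f : α → ℝ} {B : ℝ} (hf : ∀ k ∈ s, f k ≤ B)
    (hB : 0 ≤ B) : ⨆ k ∈ s, f k ≤ B :=
  Real.iSup_le (fun k => Real.iSup_le (hf k) hB) hB

theorem Real.le_biSup {α : Type*} {s : Set α} {f : α → ℝ} (hf : BddAbove (f '' s)) {k : α}
    (hk : k ∈ s) : f k ≤ ⨆ i ∈ s, f i :=
  le_ciSup₂ (f := fun i (_ : i ∈ s) => f i)
    (hf.mono (Set.iUnion_subset fun _ => Set.range_subset_iff.2 (Set.mem_image_of_mem f))) k hk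

section Countable

variable {Ω : Type*} [Countable Ω]

theorem ae_all_iff_of_countable {m0 : MeasurableSpace Ω} {μ : Measure Ω} {ι : Sort*}
    {p : Ω → ι → Prop} : (∀ᵐ ω ∂μ, ∀ i, p ω i) ↔ ∀ i, ∀ᵐ ω ∂μ, p ω i := by
  simp only [ae_iff_of_countable]
  exact ⟨fun h i ω hω => h ω hω i, fun h ω hω i => h i ω hω⟩

theorem Measurable.comp_of_countable {m : MeasurableSpace Ω} {β γ : Type*} [MeasurableSpace β]
    [MeasurableSingletonClass β] [MeasurableSpace γ] {f : Ω → β} (hf : Measurable[m] f)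
    (g : β → γ) : Measurable[m] (g ∘ f) := by
  intro s _
  have hpre : g ∘ f ⁻¹' s = f ⁻¹' (g ⁻¹' s ∩ Set.range f) := by
    ext ω; simp
  rw [hpre]
  exact hf ((Set.countable_range f).mono Set.inter_subset_right).measurableSet

theorem Measurable.comp₂_of_countable {m : MeasurableSpace Ω} {β γ δ : Type*}
    [MeasurableSpace β] [MeasurableSingletonClass β] [MeasurableSpace γ]
    [MeasurableSingletonClass γ] [MeasurableSpace δ] {f : Ω → β} {g : Ω → γ}
    (hf : Measurable[m] f) (hg : Measurable[m] g) (F : β → γ → δ) :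
    Measurable[m] fun ω => F (f ω) (g ω) :=
  (hf.prodMk hg).comp_of_countable (Function.uncurry F)

end Countable

theorem MeasureTheory.AEStronglyMeasurable.integrable_of_finite {Ω E : Type*} [Finite Ω]
    {m0 : MeasurableSpace Ω} {μ : Measure Ω} [IsFiniteMeasure μ] [NormedAddCommGroup E] {f : Ω → E}
    (hf : AEStronglyMeasurable f μ) : Integrable f μ := by
  obtain ⟨C, hC⟩ := (Set.finite_range fun ω => ‖f ω‖).bddAbove
  exact .of_bound hf C (ae_of_all _ fun ω => hC ⟨ω, rfl⟩)

theorem Measurable.integrable_comp_of_finite {Ω β : Type*} [Finite Ω] {m0 : MeasurableSpace Ω}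
    {μ : Measure Ω} [IsFiniteMeasure μ] [MeasurableSpace β] [MeasurableSingletonClass β]
    {f : Ω → β} (hf : Measurable f) (g : β → ℝ) : Integrable (g ∘ f) μ :=
  (hf.comp_of_countable g).aestronglyMeasurable.integrable_of_finite

section CondExp

variable {Ω : Type*} {m0 : MeasurableSpace Ω} {μ : Measure Ω}

theorem condExp_eval_ae_eq_of_finite_range {m : MeasurableSpace Ω} (hm : m ≤ m0) {E : Type*}
    [MeasurableSpace E] [MeasurableSingletonClass E] {Z : Ω → E} (hZ : Measurable[m] Z)
    (hZ_fin : (Set.range Z).Finite) {F : E → Ω → ℝ} (hF : ∀ v, Integrable (F v) μ) :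
    μ[fun ω => F (Z ω) ω | m] =ᵐ[μ] fun ω => μ[F (Z ω) | m] ω := by
  have hsum : ∀ (g : E → Ω → ℝ) (ω : Ω),
      ∑ v ∈ hZ_fin.toFinset, (Z ⁻¹' {v}).indicator (g v) ω = g (Z ω) ω := by
    intro g ω
    rw [Finset.sum_eq_single_of_mem (Z ω) (by simp)]
    · exact Set.indicator_of_mem (s := Z ⁻¹' {Z ω}) rfl _
    · exact fun v _ hv => Set.indicator_of_notMem (s := Z ⁻¹' {v}) (fun h => hv h.symm) _
  have hdecomp : (fun ω => F (Z ω) ω) = ∑ v ∈ hZ_fin.toFinset, (Z ⁻¹' {v}).indicator (F v) := by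
    ext ω
    rw [Finset.sum_apply, hsum]
  have hZv : ∀ v, MeasurableSet[m] (Z ⁻¹' {v}) := fun v => hZ (measurableSet_singleton v)
  have hind : ∀ᵐ ω ∂μ, ∀ v ∈ hZ_fin.toFinset, μ[(Z ⁻¹' {v}).indicator (F v) | m] ω
      = (Z ⁻¹' {v}).indicator (μ[F v | m]) ω :=
    (Filter.eventually_all_finset _).2 fun v _ => condExp_indicator (hF v) (hZv v)
  rw [hdecomp]
  filter_upwards [condExp_finsetSum (fun v _ => (hF v).indicator (hm _ (hZv v))) m, hind]
    with ω hsumω hindω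
  rw [hsumω, Finset.sum_apply, Finset.sum_congr rfl hindω, hsum]

theorem ae_mul_le_of_add_condExp_le [IsFiniteMeasure μ] {ℱ : Filtration ℕ m0} {T : ℕ}
    {D : ℕ → Ω → ℝ} (hD : ∀ t, Integrable (D t) μ) {c : ℝ} (hT : ∀ᵐ ω ∂μ, c ≤ D T ω)
    (hstep : ∀ t < T, ∀ᵐ ω ∂μ, c + μ[D (t + 1) | ℱ t] ω ≤ D t ω) :
    ∀ᵐ ω ∂μ, (T + 1) * c ≤ D 0 ω := by
  suffices h : ∀ t ≤ T, ∀ᵐ ω ∂μ, ((T - t : ℕ) + 1) * c ≤ D t ω by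
    simpa using h 0 (Nat.zero_le T)
  intro t ht
  induction ht using Nat.decreasingInduction with
  | self => simpa using hT
  | of_succ t htT ih =>
    have hcond : ∀ᵐ ω ∂μ, ((T - (t + 1) : ℕ) + 1) * c ≤ μ[D (t + 1) | ℱ t] ω := by
      have := condExp_mono (m := ℱ t) (integrable_const _) (hD (t + 1)) ih
      rwa [condExp_const (ℱ.le t)] at this
    filter_upwards [hcond, hstep t htT] with ω h1 h2
    rw [show T - t = T - (t + 1) + 1 by omega, Nat.cast_add_one]
    linarith

theorem ae_le_mul_of_le_add_condExp [IsFiniteMeasure μ] {ℱ : Filtration ℕ m0} {T : ℕ}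
    {D : ℕ → Ω → ℝ} (hD : ∀ t, Integrable (D t) μ) {c : ℝ} (hT : ∀ᵐ ω ∂μ, D T ω ≤ c)
    (hstep : ∀ t < T, ∀ᵐ ω ∂μ, D t ω ≤ c + μ[D (t + 1) | ℱ t] ω) :
    ∀ᵐ ω ∂μ, D 0 ω ≤ (T + 1) * c := by
  have hneg := ae_mul_le_of_add_condExp_le (ℱ := ℱ) (D := -D) (c := -c) (fun t => (hD t).neg)
    (by filter_upwards [hT] with ω hω; simpa using hω)
    (fun t ht => by
      filter_upwards [hstep t ht, condExp_neg (D (t + 1)) (ℱ t)] with ω hω hnegω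
      simp only [Pi.neg_apply, hnegω]
      linarith)
  filter_upwards [hneg] with ω hω
  simp only [Pi.neg_apply] at hω
  linarith

theorem condExp_sum_Icc_ae_eq [IsFiniteMeasure μ] {ℱ : Filtration ℕ m0} {r : ℕ → Ω → ℝ}
    {t T : ℕ} (htT : t < T) (hrt : StronglyMeasurable[ℱ t] (r t))
    (hr : ∀ s, Integrable (r s) μ) :
    μ[fun ω => ∑ s ∈ Icc t T, r s ω | ℱ t] =ᵐ[μ]
      r t + μ[μ[fun ω => ∑ s ∈ Icc (t + 1) T, r s ω | ℱ (t + 1)] | ℱ t] := by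
  have hsplit : (fun ω => ∑ s ∈ Icc t T, r s ω) = r t + fun ω => ∑ s ∈ Icc (t + 1) T, r s ω := by
    ext ω
    rw [Pi.add_apply, Icc_eq_cons_Ioc htT.le, sum_cons, Icc_add_one_left_eq_Ioc]
  have htail : Integrable (fun ω => ∑ s ∈ Icc (t + 1) T, r s ω) μ :=
    integrable_finsetSum _ fun s _ => hr s
  rw [hsplit]
  filter_upwards [condExp_add (hr t) htail (ℱ t),
    condExp_condExp_of_le (μ := μ) (f := fun ω => ∑ s ∈ Icc (t + 1) T, r s ω)
      (ℱ.mono t.le_succ) (ℱ.le (t + 1))] with ω hadd htower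
  rw [hadd, Pi.add_apply, Pi.add_apply, condExp_of_stronglyMeasurable (ℱ.le t) hrt (hr t), htower]

end CondExp

section Control

variable {Ω E S : Type*} [AddCommGroup E] {y0 : E} {h : ℕ → Ω → E}

theorem ctrl_self (y0 : E) (h : ℕ → Ω → E) (t : ℕ) (ω : Ω) : ctrl y0 h t t ω = y0 := by
  simp [ctrl]

theorem ctrl_succ {t0 t : ℕ} (ht : t0 ≤ t) (ω : Ω) :
    ctrl y0 h t0 (t + 1) ω = ctrl y0 h t0 t ω - h t ω := by
  rw [ctrl, ctrl, sum_Ico_succ_top ht]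
  abel

noncomputable def valueAlong (V : ℕ → E → S → ℝ) (X : ℕ → Ω → S) (y0 : E) (h : ℕ → Ω → E)
    (t : ℕ) (ω : Ω) : ℝ :=
  V t (ctrl y0 h 0 t ω) (X t ω)

structure IsBellmanSolution (T : ℕ) (H : ℕ → E → S → ℝ) (K : ℕ → E → S → Set E)
    (G V : ℕ → E → S → ℝ) : Prop where
  eq_of_lt : ∀ t < T, ∀ y x, V t y x = ⨆ k ∈ K t y x, (H t k x + G t (y - k) x)
  eq_terminal : ∀ y x, V T y x = ⨆ k ∈ K T y x, H T k x

theorem admissible_of_forall_ae_mem [MeasurableSpace E] {m0 : MeasurableSpace Ω} {μ : Measure Ω}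
    {ℱ : Filtration ℕ m0} {T t0 : ℕ} {K : ℕ → E → S → Set E} {X : ℕ → Ω → S}
    (hh : ∀ s, Measurable[ℱ s] (h s))
    (hK : ∀ s, t0 ≤ s → s ≤ T → ∀ᵐ ω ∂μ, h s ω ∈ K s (ctrl y0 h t0 s ω) (X s ω)) :
    Admissible μ ℱ T K X t0 y0 h := by
  refine ⟨hh, ae_all_iff.2 fun s => ?_⟩
  by_cases hs : t0 ≤ s ∧ s ≤ T
  · filter_upwards [hK s hs.1 hs.2] with ω hω _ _ using hω
  · exact ae_of_all _ fun _ h1 h2 => absurd ⟨h1, h2⟩ hs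

end Control

section ControlProblem

variable {Ω E S : Type*} [Finite Ω] {m0 : MeasurableSpace Ω} {μ : Measure Ω} [IsFiniteMeasure μ]
  {ℱ : Filtration ℕ m0} [MeasurableSpace S] [MeasurableSingletonClass S] {T : ℕ}
  {X : ℕ → Ω → S} {H V G : ℕ → E → S → ℝ} {K : ℕ → E → S → Set E} {C : ℝ} {h : ℕ → Ω → E}

theorem ae_forall_G_le (hX : ∀ t, Measurable[ℱ t] (X t))
    (hG : ∀ t (y' : E), (fun ω => G t y' (X t ω)) =ᵐ[μ]
      μ[fun ω => V (t + 1) y' (X (t + 1) ω) | ℱ t]) {t : ℕ} {B : ℝ}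
    (hV : ∀ᵐ ω ∂μ, ∀ y, V (t + 1) y (X (t + 1) ω) ≤ B) :
    ∀ᵐ ω ∂μ, ∀ y, G t y (X t ω) ≤ B := by
  refine ae_all_iff_of_countable.2 fun y => ?_
  have hmono := condExp_mono (m := ℱ t)
    (((hX (t + 1)).mono (ℱ.le _) le_rfl).integrable_comp_of_finite (V (t + 1) y))
    (integrable_const B) (ae_all_iff_of_countable.1 hV y)
  rw [condExp_const (ℱ.le t)] at hmono
  filter_upwards [hG t y, hmono] with ω hGω hle
  exact hGω.trans_le hle

theorem polValue_self [MeasurableSpace E] [MeasurableSingletonClass E]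
    (hX : ∀ t, Measurable[ℱ t] (X t)) (hh : ∀ s, Measurable[ℱ s] (h s)) :
    polValue μ ℱ T H X T h = fun ω => H T (h T ω) (X T ω) := by
  have hm := (hh T).prodMk (hX T)
  simp only [polValue, Icc_self, sum_singleton]
  exact condExp_of_stronglyMeasurable (ℱ.le T)
    (hm.comp_of_countable (Function.uncurry (H T))).stronglyMeasurable
    ((hm.mono (ℱ.le T) le_rfl).integrable_comp_of_finite (Function.uncurry (H T)))

variable [AddCommGroup E]

theorem exists_ae_forall_V_le (hX : ∀ t, Measurable[ℱ t] (X t)) (hC : ∀ s k x, H s k x ≤ C)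
    (hG : ∀ t (y' : E), (fun ω => G t y' (X t ω)) =ᵐ[μ]
      μ[fun ω => V (t + 1) y' (X (t + 1) ω) | ℱ t])
    (hV : IsBellmanSolution T H K G V) {t : ℕ} (ht : t ≤ T) :
    ∃ B, ∀ᵐ ω ∂μ, ∀ y, V t y (X t ω) ≤ B := by
  induction ht using Nat.decreasingInduction with
  | self =>
    refine ⟨max C 0, ae_of_all _ fun ω y => ?_⟩
    rw [hV.eq_terminal]
    exact Real.biSup_le (fun k _ => (hC T k _).trans (le_max_left _ _)) (le_max_right _ _)
  | of_succ t htT ih =>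
    obtain ⟨B, hB⟩ := ih
    refine ⟨max (C + B) 0, ?_⟩
    filter_upwards [ae_forall_G_le hX hG hB] with ω hGω y
    rw [hV.eq_of_lt t htT]
    exact Real.biSup_le (fun k _ => (add_le_add (hC t k _) (hGω _)).trans (le_max_left _ _))
      (le_max_right _ _)

theorem ae_add_G_le_V (hX : ∀ t, Measurable[ℱ t] (X t)) (hC : ∀ s k x, H s k x ≤ C)
    (hG : ∀ t (y' : E), (fun ω => G t y' (X t ω)) =ᵐ[μ]
      μ[fun ω => V (t + 1) y' (X (t + 1) ω) | ℱ t])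
    (hV : IsBellmanSolution T H K G V) {t : ℕ} (htT : t < T) :
    ∀ᵐ ω ∂μ, ∀ y, ∀ k ∈ K t y (X t ω), H t k (X t ω) + G t (y - k) (X t ω) ≤ V t y (X t ω) := by
  obtain ⟨B, hB⟩ := exists_ae_forall_V_le hX hC hG hV htT
  filter_upwards [ae_forall_G_le hX hG hB] with ω hGω y k hk
  rw [hV.eq_of_lt t htT]
  exact Real.le_biSup (f := fun k => H t k (X t ω) + G t (y - k) (X t ω))
    ⟨C + B, Set.forall_mem_image.2 fun k _ => add_le_add (hC t k _) (hGω _)⟩ hk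

variable [MeasurableSpace E] [MeasurableSingletonClass E] {y0 : E}

theorem measurable_ctrl_succ (hh : ∀ s, Measurable[ℱ s] (h s)) (t : ℕ) :
    Measurable[ℱ t] (ctrl y0 h 0 (t + 1)) := by
  induction t with
  | zero =>
    rw [funext (ctrl_succ (y0 := y0) (h := h) le_rfl)]
    simp only [ctrl_self]
    exact (hh 0).comp_of_countable (y0 - ·)
  | succ t ih =>
    rw [funext (ctrl_succ (y0 := y0) (h := h) (Nat.zero_le (t + 1)))]
    exact (ih.mono (ℱ.mono t.le_succ) le_rfl).comp₂_of_countable (hh (t + 1)) (· - ·)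

theorem measurable_ctrl (hh : ∀ s, Measurable[ℱ s] (h s)) (t : ℕ) :
    Measurable[ℱ t] (ctrl y0 h 0 t) := by
  cases t with
  | zero => simpa only [funext (ctrl_self y0 h 0)] using measurable_const
  | succ t => exact (measurable_ctrl_succ hh t).mono (ℱ.mono t.le_succ) le_rfl

theorem integrable_valueAlong (hX : ∀ t, Measurable[ℱ t] (X t))
    (hh : ∀ s, Measurable[ℱ s] (h s)) (t : ℕ) : Integrable (valueAlong V X y0 h t) μ :=
  (((measurable_ctrl hh t).prodMk (hX t)).mono (ℱ.le t) le_rfl).integrable_comp_of_finite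
    (Function.uncurry (V t))

theorem condExp_valueAlong_succ_ae_eq (hX : ∀ t, Measurable[ℱ t] (X t))
    (hh : ∀ s, Measurable[ℱ s] (h s))
    (hG : ∀ t (y' : E), (fun ω => G t y' (X t ω)) =ᵐ[μ]
      μ[fun ω => V (t + 1) y' (X (t + 1) ω) | ℱ t]) (t : ℕ) :
    μ[valueAlong V X y0 h (t + 1) | ℱ t] =ᵐ[μ] fun ω => G t (ctrl y0 h 0 (t + 1) ω) (X t ω) := by
  filter_upwards [condExp_eval_ae_eq_of_finite_range (ℱ.le t) (measurable_ctrl_succ hh t)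
      (Set.finite_range _)
      fun y => ((hX (t + 1)).mono (ℱ.le _) le_rfl).integrable_comp_of_finite (V (t + 1) y),
    ae_all_iff_of_countable.2 (hG t)] with ω hfreeze hGω
  exact hfreeze.trans (hGω _).symm

theorem polValue_sub_valueAlong_ae_eq (hX : ∀ t, Measurable[ℱ t] (X t))
    (hh : ∀ s, Measurable[ℱ s] (h s))
    (hG : ∀ t (y' : E), (fun ω => G t y' (X t ω)) =ᵐ[μ]
      μ[fun ω => V (t + 1) y' (X (t + 1) ω) | ℱ t]) {t : ℕ} (htT : t < T) :
    polValue μ ℱ T H X t h - valueAlong V X y0 h t =ᵐ[μ]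
      (fun ω => H t (h t ω) (X t ω) + G t (ctrl y0 h 0 t ω - h t ω) (X t ω)
        - valueAlong V X y0 h t ω)
      + μ[polValue μ ℱ T H X (t + 1) h - valueAlong V X y0 h (t + 1) | ℱ t] := by
  have hpair : ∀ s, Measurable[ℱ s] fun ω => (h s ω, X s ω) := fun s => (hh s).prodMk (hX s)
  filter_upwards [condExp_sum_Icc_ae_eq (r := fun s ω => H s (h s ω) (X s ω)) htT
      ((hpair t).comp_of_countable (Function.uncurry (H t))).stronglyMeasurable
      fun s => ((hpair s).mono (ℱ.le s) le_rfl).integrable_comp_of_finite (Function.uncurry (H s)),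
    condExp_sub (integrable_condExp (f := fun ω => ∑ s ∈ Icc (t + 1) T, H s (h s ω) (X s ω)))
      (integrable_valueAlong (y0 := y0) hX hh (t + 1)) (ℱ t),
    condExp_valueAlong_succ_ae_eq (y0 := y0) hX hh hG t] with ω hsum hsub hGω
  simp only [polValue, Pi.add_apply, Pi.sub_apply] at hsum hsub ⊢
  rw [hsum, hsub, hGω, ctrl_succ (Nat.zero_le t)]
  ring

theorem polValue_le_of_admissible (hX : ∀ t, Measurable[ℱ t] (X t)) (hC : ∀ s k x, H s k x ≤ C)
    (hG : ∀ t (y' : E), (fun ω => G t y' (X t ω)) =ᵐ[μ]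
      μ[fun ω => V (t + 1) y' (X (t + 1) ω) | ℱ t])
    (hV : IsBellmanSolution T H K G V) (hadm : Admissible μ ℱ T K X 0 y0 h) :
    ∀ᵐ ω ∂μ, polValue μ ℱ T H X 0 h ω ≤ V 0 y0 (X 0 ω) := by
  obtain ⟨hh, hK⟩ := hadm
  have hD := ae_le_mul_of_le_add_condExp (ℱ := ℱ) (T := T) (c := 0)
    (D := fun t => polValue μ ℱ T H X t h - valueAlong V X y0 h t)
    (fun t => integrable_condExp.sub (integrable_valueAlong hX hh t)) ?_ fun t htT => ?_
  · filter_upwards [hD] with ω hω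
    simp only [Pi.sub_apply, valueAlong, ctrl_self] at hω
    linarith
  · filter_upwards [hK] with ω hω
    rw [Pi.sub_apply, polValue_self hX hh, valueAlong, hV.eq_terminal, sub_nonpos]
    exact Real.le_biSup ⟨C, Set.forall_mem_image.2 fun k _ => hC T k _⟩
      (hω T (Nat.zero_le T) le_rfl)
  · filter_upwards [polValue_sub_valueAlong_ae_eq hX hh hG htT,
      ae_add_G_le_V hX hC hG hV htT, hK] with ω hdec hbell hω
    have := hbell _ _ (hω t (Nat.zero_le t) htT.le)
    rw [hdec, Pi.add_apply, valueAlong]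
    linarith

theorem le_polValue_of_greedy (hX : ∀ t, Measurable[ℱ t] (X t))
    (hG : ∀ t (y' : E), (fun ω => G t y' (X t ω)) =ᵐ[μ]
      μ[fun ω => V (t + 1) y' (X (t + 1) ω) | ℱ t])
    (hV : IsBellmanSolution T H K G V) {ε : ℝ} (hh : ∀ s, Measurable[ℱ s] (h s))
    (hgreedy : ∀ s < T, ∀ᵐ ω ∂μ,
      (⨆ k ∈ K s (ctrl y0 h 0 s ω) (X s ω),
          (H s k (X s ω) + G s (ctrl y0 h 0 s ω - k) (X s ω))) - ε
        ≤ H s (h s ω) (X s ω) + G s (ctrl y0 h 0 s ω - h s ω) (X s ω))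
    (hgreedyT : ∀ᵐ ω ∂μ,
      (⨆ k ∈ K T (ctrl y0 h 0 T ω) (X T ω), H T k (X T ω)) - ε ≤ H T (h T ω) (X T ω)) :
    ∀ᵐ ω ∂μ, V 0 y0 (X 0 ω) - (T + 1) * ε ≤ polValue μ ℱ T H X 0 h ω := by
  have hD := ae_mul_le_of_add_condExp_le (ℱ := ℱ) (T := T) (c := -ε)
    (D := fun t => polValue μ ℱ T H X t h - valueAlong V X y0 h t)
    (fun t => integrable_condExp.sub (integrable_valueAlong hX hh t)) ?_ fun t htT => ?_
  · filter_upwards [hD] with ω hω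
    simp only [Pi.sub_apply, valueAlong, ctrl_self] at hω
    linarith
  · filter_upwards [hgreedyT] with ω hω
    rw [Pi.sub_apply, polValue_self hX hh, valueAlong, hV.eq_terminal]
    linarith
  · filter_upwards [polValue_sub_valueAlong_ae_eq hX hh hG htT, hgreedy t htT] with ω hdec hω
    rw [← hV.eq_of_lt t htT] at hω
    rw [hdec, Pi.add_apply, valueAlong]
    linarith

end ControlProblem

theorem eps_greedy_low_biased_general
    {Ω : Type*} [Fintype Ω] {m0 : MeasurableSpace Ω}
    (μ : Measure Ω) [IsProbabilityMeasure μ] (ℱ : Filtration ℕ m0)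
    {l d : ℕ} (T : ℕ)
    (X : ℕ → Ω → (Fin d → ℝ)) (hX : ∀ t, Measurable[ℱ t] (X t))
    (H : ℕ → (Fin l → ℝ) → (Fin d → ℝ) → ℝ)
    (K : ℕ → (Fin l → ℝ) → (Fin d → ℝ) → Set (Fin l → ℝ))
    (C : ℝ) (hC : ∀ s (hv : Fin l → ℝ) (x : Fin d → ℝ), |H s hv x| ≤ C)
    (V G : ℕ → (Fin l → ℝ) → (Fin d → ℝ) → ℝ)
    -- `G_t(y', X_t) = E[V_{t+1}(y', X_{t+1}) | X_t]`
    (hG : ∀ t (y' : Fin l → ℝ), (fun ω => G t y' (X t ω)) =ᵐ[μ]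
      μ[fun ω => V (t + 1) y' (X (t + 1) ω) | ℱ t])
    -- `V` solves the exact dynamic programming equations
    (hBell : ∀ t, t < T → ∀ (y' : Fin l → ℝ) (x : Fin d → ℝ),
      V t y' x = ⨆ h ∈ K t y' x, (H t h x + G t (y' - h) x))
    (hBellT : ∀ (y' : Fin l → ℝ) (x : Fin d → ℝ), V T y' x = ⨆ h ∈ K T y' x, H T h x)
    (ε : ℝ)
    (y0 : Fin l → ℝ)
    (piHat : ℕ → Ω → (Fin l → ℝ))
    (hmeas : ∀ s, Measurable[ℱ s] (piHat s))
    -- ε-greedy selection at each time `s < T`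
    (hgreedy : ∀ s, s < T → ∀ᵐ ω ∂μ,
      piHat s ω ∈ K s (ctrl y0 piHat 0 s ω) (X s ω)
      ∧ (⨆ h ∈ K s (ctrl y0 piHat 0 s ω) (X s ω),
            (H s h (X s ω) + G s (ctrl y0 piHat 0 s ω - h) (X s ω))) - ε
          ≤ H s (piHat s ω) (X s ω)
            + G s (ctrl y0 piHat 0 s ω - piHat s ω) (X s ω))
    -- ε-greedy selection at the terminal time
    (hgreedyT : ∀ᵐ ω ∂μ,
      piHat T ω ∈ K T (ctrl y0 piHat 0 T ω) (X T ω)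
      ∧ (⨆ h ∈ K T (ctrl y0 piHat 0 T ω) (X T ω), H T h (X T ω)) - ε
          ≤ H T (piHat T ω) (X T ω)) :
    Admissible μ ℱ T K X 0 y0 piHat
    ∧ (∀ᵐ ω ∂μ,
        valueFn μ ℱ T H K X 0 y0 ω - (T + 1 : ℝ) * ε
            ≤ polValue μ ℱ T H X 0 piHat ω
        ∧ polValue μ ℱ T H X 0 piHat ω ≤ valueFn μ ℱ T H K X 0 y0 ω) := by
  have hC' : ∀ s k x, H s k x ≤ C := fun s k x => (le_abs_self _).trans (hC s k x)
  have hV : IsBellmanSolution T H K G V := ⟨hBell, hBellT⟩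
  have hadm : Admissible μ ℱ T K X 0 y0 piHat := by
    refine admissible_of_forall_ae_mem hmeas fun s _ hsT => ?_
    rcases hsT.lt_or_eq with hsT | rfl
    · filter_upwards [hgreedy s hsT] with ω hω using hω.1
    · filter_upwards [hgreedyT] with ω hω using hω.1
  have hup : ∀ᵐ ω ∂μ, ∀ π : {h // Admissible μ ℱ T K X 0 y0 h},
      polValue μ ℱ T H X 0 π.1 ω ≤ V 0 y0 (X 0 ω) :=
    ae_all_iff_of_countable.2 fun π => polValue_le_of_admissible hX hC' hG hV π.2
  have hlow := le_polValue_of_greedy hX hG hV hmeas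
    (fun s hs => (hgreedy s hs).mono fun _ hω => hω.2) (hgreedyT.mono fun _ hω => hω.2)
  refine ⟨hadm, ?_⟩
  filter_upwards [hup, hlow] with ω hupω hlowω
  have : Nonempty {h // Admissible μ ℱ T K X 0 y0 h} := ⟨⟨piHat, hadm⟩⟩
  exact ⟨by linarith [show valueFn μ ℱ T H K X 0 y0 ω ≤ V 0 y0 (X 0 ω) from ciSup_le hupω],
    le_ciSup ⟨_, Set.forall_mem_range.2 hupω⟩ ⟨piHat, hadm⟩⟩

/-- an ε-greedy policy with respect to the exact dynamic
programming solution is admissible and loses at most `(T+1)ε` of value. -/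
theorem eps_greedy_low_biased
    {Ω : Type*} [Fintype Ω] {m0 : MeasurableSpace Ω}
    (μ : Measure Ω) [IsProbabilityMeasure μ] (ℱ : Filtration ℕ m0)
    {l d : ℕ} (T : ℕ)
    (X : ℕ → Ω → (Fin d → ℝ)) (hX : ∀ t, Measurable[ℱ t] (X t))
    (H : ℕ → (Fin l → ℝ) → (Fin d → ℝ) → ℝ)
    (K : ℕ → (Fin l → ℝ) → (Fin d → ℝ) → Set (Fin l → ℝ))
    (C : ℝ) (hC : ∀ s (hv : Fin l → ℝ) (x : Fin d → ℝ), |H s hv x| ≤ C)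
    (V G : ℕ → (Fin l → ℝ) → (Fin d → ℝ) → ℝ)
    -- `G_t(y', X_t) = E[V_{t+1}(y', X_{t+1}) | X_t]`
    (hG : ∀ t (y' : Fin l → ℝ), (fun ω => G t y' (X t ω)) =ᵐ[μ]
      μ[fun ω => V (t + 1) y' (X (t + 1) ω) | ℱ t])
    -- `V` solves the exact dynamic programming equations
    (hBell : ∀ t, t < T → ∀ (y' : Fin l → ℝ) (x : Fin d → ℝ),
      V t y' x = ⨆ h ∈ K t y' x, (H t h x + G t (y' - h) x))
    (hBellT : ∀ (y' : Fin l → ℝ) (x : Fin d → ℝ), V T y' x = ⨆ h ∈ K T y' x, H T h x)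
    (ε : ℝ) (hε : 0 < ε)
    (y0 : Fin l → ℝ)
    (piHat : ℕ → Ω → (Fin l → ℝ))
    (hmeas : ∀ s, Measurable[ℱ s] (piHat s))
    -- ε-greedy selection at each time `s < T`
    (hgreedy : ∀ s, s < T → ∀ᵐ ω ∂μ,
      piHat s ω ∈ K s (ctrl y0 piHat 0 s ω) (X s ω)
      ∧ (⨆ h ∈ K s (ctrl y0 piHat 0 s ω) (X s ω),
            (H s h (X s ω) + G s (ctrl y0 piHat 0 s ω - h) (X s ω))) - ε
          ≤ H s (piHat s ω) (X s ω)
            + G s (ctrl y0 piHat 0 s ω - piHat s ω) (X s ω))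
    -- ε-greedy selection at the terminal time
    (hgreedyT : ∀ᵐ ω ∂μ,
      piHat T ω ∈ K T (ctrl y0 piHat 0 T ω) (X T ω)
      ∧ (⨆ h ∈ K T (ctrl y0 piHat 0 T ω) (X T ω), H T h (X T ω)) - ε
          ≤ H T (piHat T ω) (X T ω)) :
    Admissible μ ℱ T K X 0 y0 piHat
    ∧ (∀ᵐ ω ∂μ,
        valueFn μ ℱ T H K X 0 y0 ω - (T + 1 : ℝ) * ε
            ≤ polValue μ ℱ T H X 0 piHat ω
        ∧ polValue μ ℱ T H X 0 piHat ω ≤ valueFn μ ℱ T H K X 0 y0 ω) :=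
  eps_greedy_low_biased_general μ ℱ T X hX H K C hC V G hG hBell hBellT ε y0 piHat hmeas hgreedy
    hgreedyT
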